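/- arXiv:1806.07021 — 6 statements merged into one kernel-verified Lean document; each statement's English description precedes it below -/
import Mathlib

section
/- Let G be a vertex-minimal non-(1_1,...,1_a,0_1,...,0_b)-colorable graph, v a vertex of G, and c a coloring of G−v (a partition of V(G)−v into b independent sets with colors 0_1,...,0_b and a sets of maximum degree ≤ 1 with colors 1_1,...,1_a). If S is the set of neighbors of v whose color appears exactly once among N(v), then every vertex of S is saturated, where a vertex is saturated if it has a 0-color, or it has a 1-color and a neighbor of the same 1-color. -/
/-- `G` is `(1_1,…,1_a,0_1,…,0_b)`-colorable: `a + b` colors, the first `a` classes induce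
subgraphs of maximum degree at most `1`, the last `b` classes are independent sets. -/
def DColorable {V : Type*} (G : SimpleGraph V) (a b : ℕ) : Prop :=
  ∃ f : V → Fin (a + b),
    (∀ v, (f v : ℕ) < a → {w | G.Adj v w ∧ f w = f v}.Subsingleton) ∧
    (∀ v, a ≤ (f v : ℕ) → ∀ w, G.Adj v w → f w ≠ f v)

/-- `f` is a coloring of `G - v`: on vertices other than `v`, the first `a` (type-1) color
classes induce subgraphs of maximum degree at most `1` and the last `b` (type-0) color
classes are independent sets. -/
def PartialColoring {V : Type*} (G : SimpleGraph V) (a b : ℕ) (v : V)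
    (f : V → Fin (a + b)) : Prop :=
  (∀ u, u ≠ v → (f u : ℕ) < a →
    {w | w ≠ v ∧ G.Adj u w ∧ f w = f u}.Subsingleton) ∧
  (∀ u, u ≠ v → a ≤ (f u : ℕ) → ∀ w, w ≠ v → G.Adj u w → f w ≠ f u)

/-- In a coloring of `G - v`, a vertex `u` is saturated if it has a type-0 color
(index `≥ a`), or it has a type-1 color shared with one of its neighbors in `G - v`. -/
def Saturated {V : Type*} (G : SimpleGraph V) (a b : ℕ) (v : V)
    (f : V → Fin (a + b)) (u : V) : Prop :=
  a ≤ (f u : ℕ) ∨ ((f u : ℕ) < a ∧ ∃ w, w ≠ v ∧ G.Adj u w ∧ f w = f u)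

/-- In a coloring of `G - v`, a vertex `u` is 1-saturated if it has a type-1 color
(index `< a`) shared with one of its neighbors in `G - v`. -/
def OneSaturated {V : Type*} (G : SimpleGraph V) (a b : ℕ) (v : V)
    (f : V → Fin (a + b)) (u : V) : Prop :=
  (f u : ℕ) < a ∧ ∃ w, w ≠ v ∧ G.Adj u w ∧ f w = f u

/-- The color of the neighbor `u` of `v` appears exactly once among the neighbors of `v`. -/
def UniqueColor {V : Type*} (G : SimpleGraph V) {n : ℕ} (v : V)
    (f : V → Fin n) (u : V) : Prop :=
  ∀ w, G.Adj v w → f w = f u → w = u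

/-!
If a neighbour `u` of `v` were unsaturated, its color would be of type 1 with no neighbour of
the same color in `G - v`. Giving `v` the color of `u` then yields a coloring of `G`: the only
neighbour of `v` with that color is `u` (the color is unique on `N(v)`), and `u` gains `v` as its
single monochromatic neighbour. This contradicts the non-colorability of `G`.
-/

namespace PartialColoring

variable {V : Type*} {G : SimpleGraph V} {a b : ℕ} {v u : V} {f : V → Fin (a + b)}

lemma dColorable_update [DecidableEq V] (hf : PartialColoring G a b v f)
    (huniq : UniqueColor G v f u) (hns : ¬ Saturated G a b v f u) :
    DColorable G a b := by
  simp only [Saturated, not_or, not_and, not_exists, not_le] at hns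
  obtain ⟨hlt, hlone⟩ := hns
  replace hlone : ∀ w, w ≠ v → G.Adj u w → f w ≠ f u := hlone hlt
  set g := Function.update f v (f u)
  have hgv : g v = f u := Function.update_self _ _ _
  have hg : ∀ x, x ≠ v → g x = f x := fun x hx => Function.update_of_ne hx _ _
  refine ⟨g, fun x hx => ?_, fun x hx w hxw hc => ?_⟩
  · by_cases hxv : x = v
    · subst hxv
      refine (Set.subsingleton_singleton (a := u)).anti fun w ⟨hxw, hc⟩ => ?_
      exact huniq w hxw (by rwa [hg w hxw.ne', hgv] at hc)
    by_cases hxu : x = u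
    · subst hxu
      refine (Set.subsingleton_singleton (a := v)).anti fun w ⟨hxw, hc⟩ => ?_
      by_contra hwv
      rw [hg w hwv, hg x hxv] at hc
      exact hlone w hwv hxw hc
    rw [hg x hxv] at hx
    refine (hf.1 x hxv hx).anti fun w ⟨hxw, hc⟩ => ?_
    rw [hg x hxv] at hc
    -- `v` is not a monochromatic neighbour of `x`, as `f u` is unique on `N(v)`
    have hwv : w ≠ v := by
      rintro rfl
      exact hxu (huniq x hxw.symm (hgv.symm.trans hc).symm)
    exact ⟨hwv, hxw, by rwa [hg w hwv] at hc⟩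
  · have hxv : x ≠ v := by
      rintro rfl
      rw [hgv] at hx
      omega
    rw [hg x hxv] at hx hc
    by_cases hwv : w = v
    · subst hwv
      rw [hgv] at hc
      obtain rfl : x = u := huniq x hxw.symm hc.symm
      omega
    · rw [hg w hwv] at hc
      exact hf.2 x hxv hx w hwv hxw hc

end PartialColoring

theorem stmt3_general {V : Type*} (G : SimpleGraph V)
    (a b : ℕ)
    (hnc : ¬ DColorable G a b)
    (v : V) (f : V → Fin (a + b)) (hf : PartialColoring G a b v f) :
    ∀ u, G.Adj v u → UniqueColor G v f u → Saturated G a b v f u :=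
  fun _ _ huniq => by
    classical
    exact by_contra fun hns => hnc (hf.dColorable_update huniq hns)

/-- In a coloring `f` of `G - v` (with `G` vertex-minimal non-colorable), every neighbor
of `v` whose color appears exactly once among the neighbors of `v` is saturated. -/
theorem stmt3 {V : Type*} [Fintype V] (G : SimpleGraph V) [DecidableRel G.Adj]
    (a b : ℕ) (ha : 1 ≤ a)
    (hnc : ¬ DColorable G a b)
    (hmin : ∀ x : V, DColorable (G.induce {x}ᶜ) a b)
    (v : V) (f : V → Fin (a + b)) (hf : PartialColoring G a b v f) :
    ∀ u, G.Adj v u → UniqueColor G v f u → Saturated G a b v f u :=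
  stmt3_general G a b hnc v f hf
end

section
/- Let G be a vertex-minimal non-(1_1,...,1_a,0_1,...,0_b)-colorable graph, v ∈ V(G) with deg(v) < 2(a+b), and c a coloring of G−v. Then v has at least (a+b) − (deg(v) − (a+b)) = 2(a+b) − deg(v) neighbors that are saturated and whose colors appear exactly once among the neighbors of v. -/
lemma extend_color {V : Type*} (G : SimpleGraph V)
    (a b : ℕ) (v : V) (f : V → Fin (a + b)) (hf : PartialColoring G a b v f)
    (i : Fin (a + b))
    (h1 : ∀ w, G.Adj v w → f w = i → (i : ℕ) < a)
    (h2 : {w | G.Adj v w ∧ f w = i}.Subsingleton)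
    (h3 : ∀ w, G.Adj v w → f w = i → ¬∃ x, x ≠ v ∧ G.Adj w x ∧ f x = f w) :
    DColorable G a b := by
  classical
  refine ⟨Function.update f v i, ?_, ?_⟩
  · intro u hu x hx y hy
    by_cases huv : u = v
    · subst huv
      obtain ⟨hax, hcx⟩ := hx
      obtain ⟨hay, hcy⟩ := hy
      have hxv : x ≠ u := hax.ne'
      have hyv : y ≠ u := hay.ne'
      rw [Function.update_of_ne hxv, Function.update_self] at hcx
      rw [Function.update_of_ne hyv, Function.update_self] at hcy
      exact h2 ⟨hax, hcx⟩ ⟨hay, hcy⟩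
    · rw [Function.update_of_ne huv] at hu
      obtain ⟨hax, hcx⟩ := hx
      obtain ⟨hay, hcy⟩ := hy
      rw [Function.update_of_ne huv] at hcx hcy
      by_cases hxv : x = v
      · by_cases hyv : y = v
        · rw [hxv, hyv]
        · exfalso
          subst hxv
          rw [Function.update_self] at hcx
          rw [Function.update_of_ne hyv] at hcy
          exact h3 u hax.symm hcx.symm ⟨y, hyv, hay, hcy⟩
      · by_cases hyv : y = v
        · exfalso
          subst hyv
          rw [Function.update_self] at hcy
          rw [Function.update_of_ne hxv] at hcx
          exact h3 u hay.symm hcy.symm ⟨x, hxv, hax, hcx⟩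
        · rw [Function.update_of_ne hxv] at hcx
          rw [Function.update_of_ne hyv] at hcy
          exact hf.1 u huv hu ⟨hxv, hax, hcx⟩ ⟨hyv, hay, hcy⟩
  · intro u hu w hadj
    by_cases huv : u = v
    · subst huv
      rw [Function.update_self] at hu ⊢
      have hwv : w ≠ u := hadj.ne'
      rw [Function.update_of_ne hwv]
      intro hcol
      exact absurd (h1 w hadj hcol) (not_lt.2 hu)
    · rw [Function.update_of_ne huv] at hu ⊢
      by_cases hwv : w = v
      · subst hwv
        rw [Function.update_self]
        intro hcol
        have hfu : f u = i := hcol.symm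
        rw [hfu] at hu
        exact absurd (h1 u hadj.symm hfu) (not_lt.2 hu)
      · rw [Function.update_of_ne hwv]
        exact hf.2 u huv hu w hwv hadj

/-- If `G` is vertex-minimal non-`(1_1,…,1_a,0_1,…,0_b)`-colorable, `deg(v) < 2(a+b)`,
and `f` is a coloring of `G - v`, then `v` has at least `2(a+b) - deg(v)` neighbors that
are saturated and whose colors appear exactly once among the neighbors of `v`. -/
theorem stmt4 {V : Type*} [Fintype V] (G : SimpleGraph V) [DecidableRel G.Adj]
    (a b : ℕ) (ha : 1 ≤ a)
    (hnc : ¬ DColorable G a b)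
    (hmin : ∀ x : V, DColorable (G.induce {x}ᶜ) a b)
    (v : V) (hdeg : G.degree v < 2 * (a + b))
    (f : V → Fin (a + b)) (hf : PartialColoring G a b v f) :
    2 * (a + b) - G.degree v ≤
      {u | G.Adj v u ∧ Saturated G a b v f u ∧ UniqueColor G v f u}.ncard := by
  classical
  set N := G.neighborFinset v with hN
  set C : Fin (a + b) → Finset V := fun i => N.filter (fun u => f u = i) with hC
  have hmemC : ∀ u i, u ∈ C i ↔ (G.Adj v u ∧ f u = i) := by
    intro u i
    simp [hC, hN, SimpleGraph.mem_neighborFinset, Finset.mem_filter]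
  -- every color class is nonempty
  have hpos : ∀ i, 1 ≤ (C i).card := by
    intro i
    rcases Nat.eq_zero_or_pos (C i).card with h0 | h1
    · exfalso
      rw [Finset.card_eq_zero] at h0
      have hempty : ∀ w, G.Adj v w → f w ≠ i := by
        intro w hw hcol
        have : w ∈ C i := (hmemC w i).2 ⟨hw, hcol⟩
        rw [h0] at this
        exact absurd this (Finset.notMem_empty w)
      exact hnc (extend_color G a b v f hf i
        (fun w hw hc => absurd hc (hempty w hw))
        (fun x hx y hy => absurd hx.2 (hempty x hx.1))
        (fun w hw hc => absurd hc (hempty w hw)))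
    · exact h1
  -- singleton classes give saturated vertices of unique color
  have hsat : ∀ u, G.Adj v u → (C (f u)).card = 1 →
      Saturated G a b v f u ∧ UniqueColor G v f u := by
    intro u hu hcard
    have huC : u ∈ C (f u) := (hmemC u (f u)).2 ⟨hu, rfl⟩
    obtain ⟨x, hx⟩ := Finset.card_eq_one.1 hcard
    have hCeq : C (f u) = {u} := by
      rw [hx] at huC ⊢
      rw [Finset.mem_singleton] at huC
      rw [huC]
    have huniq : UniqueColor G v f u := by
      intro w hw hcol
      have : w ∈ C (f u) := (hmemC w (f u)).2 ⟨hw, hcol⟩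
      rw [hCeq] at this
      exact Finset.mem_singleton.1 this
    refine ⟨?_, huniq⟩
    by_cases hfa : a ≤ (f u : ℕ)
    · exact Or.inl hfa
    · push_neg at hfa
      by_contra hns
      have hno : ¬∃ w, w ≠ v ∧ G.Adj u w ∧ f w = f u :=
        fun h => hns (Or.inr ⟨hfa, h⟩)
      apply hnc
      refine extend_color G a b v f hf (f u) (fun w _ _ => hfa) ?_ ?_
      · intro x hx y hy
        rw [huniq x hx.1 hx.2, huniq y hy.1 hy.2]
      · intro w hw hc h
        have hwu : w = u := huniq w hw hc
        subst hwu
        exact hno h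
  -- counting
  set T : Finset (Fin (a + b)) := Finset.univ.filter (fun i => (C i).card = 1) with hT
  set S : Finset V := N.filter (fun u => (C (f u)).card = 1) with hS
  have hST : S.card = T.card := by
    apply Finset.card_bij (fun u _ => f u)
    · intro u hu
      rw [hS, Finset.mem_filter] at hu
      rw [hT, Finset.mem_filter]
      exact ⟨Finset.mem_univ _, hu.2⟩
    · intro u1 hu1 u2 hu2 heq
      rw [hS, Finset.mem_filter] at hu1 hu2
      have h1 : u1 ∈ C (f u1) := (hmemC u1 (f u1)).2
        ⟨(SimpleGraph.mem_neighborFinset G v u1).1 hu1.1, rfl⟩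
      have h2 : u2 ∈ C (f u1) := (hmemC u2 (f u1)).2
        ⟨(SimpleGraph.mem_neighborFinset G v u2).1 hu2.1, heq.symm⟩
      obtain ⟨x, hx⟩ := Finset.card_eq_one.1 hu1.2
      rw [hx, Finset.mem_singleton] at h1 h2
      rw [h1, h2]
    · intro i hi
      rw [hT, Finset.mem_filter] at hi
      obtain ⟨x, hx⟩ := Finset.card_eq_one.1 hi.2
      have hxC : x ∈ C i := by rw [hx]; exact Finset.mem_singleton_self x
      rw [hmemC] at hxC
      refine ⟨x, ?_, hxC.2⟩
      rw [hS, Finset.mem_filter]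
      refine ⟨(SimpleGraph.mem_neighborFinset G v x).2 hxC.1, ?_⟩
      rw [hxC.2]
      exact hi.2
  have hdN : G.degree v = N.card := rfl
  have hsum : N.card = ∑ i : Fin (a + b), (C i).card :=
    Finset.card_eq_sum_card_fiberwise (fun u _ => Finset.mem_univ (f u))
  have hcount : 2 * (a + b) ≤ N.card + T.card := by
    have : ∑ i : Fin (a + b), 2 ≤
        ∑ i : Fin (a + b), ((C i).card + (if (C i).card = 1 then 1 else 0)) := by
      apply Finset.sum_le_sum
      intro i _
      by_cases h1 : (C i).card = 1
      · simp [h1]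
      · have := hpos i
        have h2 : 2 ≤ (C i).card := by omega
        rw [if_neg h1]
        omega
    rw [Finset.sum_add_distrib, Finset.sum_const, Finset.card_univ,
      Fintype.card_fin, smul_eq_mul, mul_comm] at this
    have hTc : (∑ i : Fin (a + b), if (C i).card = 1 then 1 else 0) = T.card := by
      rw [hT, Finset.card_filter]
    rw [hTc] at this
    omega
  have hsub : (↑S : Set V) ⊆
      {u | G.Adj v u ∧ Saturated G a b v f u ∧ UniqueColor G v f u} := by
    intro u hu
    rw [Finset.mem_coe, hS, Finset.mem_filter] at hu
    have hadj : G.Adj v u := (SimpleGraph.mem_neighborFinset G v u).1 hu.1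
    obtain ⟨h1, h2⟩ := hsat u hadj hu.2
    exact ⟨hadj, h1, h2⟩
  calc 2 * (a + b) - G.degree v ≤ T.card := by rw [hdN]; omega
    _ = S.card := hST.symm
    _ = (↑S : Set V).ncard := (Set.ncard_coe_finset S).symm
    _ ≤ _ := Set.ncard_le_ncard hsub (Set.toFinite _)
end

section
/- Let G be a vertex-minimal non-(1_1,...,1_a,0_1,...,0_b)-colorable graph, v ∈ V(G) with deg(v) < 2a + b, and c a coloring of G−v. Then v has at least 2a + b − deg(v) neighbors that are 1-saturated (colored with a type-1 color also used by one of their neighbors) and whose colors appear exactly once among the neighbors of v. -/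
/-!
Colouring `v` with a colour `i` extends `f` to a colouring of `G` unless `i` is type-0 and
appears on a neighbour of `v`, or `i` is type-1 and appears on two neighbours of `v` or on a
1-saturated one. As `G` is not colourable, every type-0 colour contributes at least one
neighbour of `v`, and every type-1 colour contributes two neighbours, or a single one, which
is then 1-saturated with a unique colour. Counting neighbours colour by colour gives
`deg v + #S ≥ 2a + b`, where `S` is the set of 1-saturated neighbours with unique colour.
-/

open Finset

section
variable {V : Type*} {G : SimpleGraph V} {a b : ℕ} {v : V} {f : V → Fin (a + b)}

theorem PartialColoring.dColorable_update_s5 (hf : PartialColoring G a b v f) (i : Fin (a + b))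
    (h₁ : (i : ℕ) < a → {u | G.Adj v u ∧ f u = i}.Subsingleton ∧
      ∀ u, G.Adj v u → f u = i → ¬ OneSaturated G a b v f u)
    (h₀ : a ≤ (i : ℕ) → ∀ u, G.Adj v u → f u ≠ i) :
    DColorable G a b := by
  classical
  have hg : ∀ w, w ≠ v → Function.update f v i w = f w := fun w hw ↦
    Function.update_of_ne hw i f
  refine ⟨Function.update f v i, ?_, ?_⟩
  · rintro u hu x ⟨hux, hx⟩ y ⟨huy, hy⟩
    rcases eq_or_ne u v with rfl | huv
    · rw [Function.update_self] at hu hx hy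
      rw [hg x (G.ne_of_adj hux).symm] at hx
      rw [hg y (G.ne_of_adj huy).symm] at hy
      exact (h₁ hu).1 ⟨hux, hx⟩ ⟨huy, hy⟩
    rw [hg u huv] at hu hx hy
    -- if `v` joins the class of `u`, then `u` was not 1-saturated, so `v` is its only class-mate
    have hv_alone : ∀ z, z ≠ v → G.Adj u z → Function.update f v i z = f u →
        ∀ x, x = v → G.Adj u x → Function.update f v i x = f u → False := by
      rintro z hzv huz hz x rfl hux hx
      rw [Function.update_self] at hx
      exact (h₁ (hx ▸ hu)).2 u hux.symm hx.symm ⟨hu, z, hzv, huz, hg z hzv ▸ hz⟩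
    rcases eq_or_ne x v with hxv | hxv <;> rcases eq_or_ne y v with hyv | hyv
    · rw [hxv, hyv]
    · exact (hv_alone y hyv huy hy x hxv hux hx).elim
    · exact (hv_alone x hxv hux hx y hyv huy hy).elim
    · exact hf.1 u huv hu ⟨hxv, hux, hg x hxv ▸ hx⟩ ⟨hyv, huy, hg y hyv ▸ hy⟩
  · intro u hu w hw hfw
    rcases eq_or_ne u v with rfl | huv
    · rw [Function.update_self] at hu hfw
      exact h₀ hu w hw (hg w (G.ne_of_adj hw).symm ▸ hfw)
    rw [hg u huv] at hu hfw
    rcases eq_or_ne w v with rfl | hwv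
    · rw [Function.update_self] at hfw
      exact h₀ (hfw ▸ hu) u hw.symm hfw.symm
    · exact hf.2 u huv hu w hwv hw (hg w hwv ▸ hfw)

theorem PartialColoring.exists_adj_of_type_zero (hnc : ¬ DColorable G a b)
    (hf : PartialColoring G a b v f) {i : Fin (a + b)} (hi : a ≤ (i : ℕ)) :
    ∃ u, G.Adj v u ∧ f u = i := by
  by_contra! h
  exact hnc (hf.dColorable_update_s5 i (fun hi' ↦ absurd hi' (not_lt.2 hi)) fun _ ↦ h)

theorem PartialColoring.exists_adj_oneSaturated_of_type_one (hnc : ¬ DColorable G a b)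
    (hf : PartialColoring G a b v f) {i : Fin (a + b)} (hi : (i : ℕ) < a)
    (hsub : {u | G.Adj v u ∧ f u = i}.Subsingleton) :
    ∃ u, G.Adj v u ∧ f u = i ∧ OneSaturated G a b v f u := by
  by_contra! h
  exact hnc (hf.dColorable_update_s5 i (fun _ ↦ ⟨hsub, h⟩) fun hi' ↦ absurd hi (not_lt.2 hi'))

variable [Fintype V] [DecidableRel G.Adj]

open scoped Classical in
theorem PartialColoring.two_le_card_adj_of_type_one (hnc : ¬ DColorable G a b)
    (hf : PartialColoring G a b v f) {i : Fin (a + b)} (hi : (i : ℕ) < a) :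
    2 ≤ #{u ∈ G.neighborFinset v | f u = i} + #{u ∈ G.neighborFinset v |
      OneSaturated G a b v f u ∧ UniqueColor G v f u ∧ f u = i} := by
  by_cases h2 : 2 ≤ #{u ∈ G.neighborFinset v | f u = i}
  · omega
  have hsub : {u | G.Adj v u ∧ f u = i}.Subsingleton := fun x hx y hy ↦
    (card_le_one (s := {u ∈ G.neighborFinset v | f u = i})).1 (by omega)
      x (by simpa using hx) y (by simpa using hy)
  obtain ⟨u, hvu, hfu, hsat⟩ := hf.exists_adj_oneSaturated_of_type_one hnc hi hsub
  have huniq : UniqueColor G v f u := fun w hvw hfw ↦ hsub ⟨hvw, hfw.trans hfu⟩ ⟨hvu, hfu⟩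
  have h₁ : 1 ≤ #{u ∈ G.neighborFinset v | f u = i} :=
    one_le_card.2 ⟨u, by simpa using ⟨hvu, hfu⟩⟩
  have h₂ : 1 ≤ #{u ∈ G.neighborFinset v |
      OneSaturated G a b v f u ∧ UniqueColor G v f u ∧ f u = i} :=
    one_le_card.2 ⟨u, by simpa using ⟨hvu, hsat, huniq, hfu⟩⟩
  omega

end

open SimpleGraph in
theorem stmt5_general {V : Type*} [Fintype V] (G : SimpleGraph V) [DecidableRel G.Adj]
    (a b : ℕ)
    (hnc : ¬ DColorable G a b)
    (v : V)
    (f : V → Fin (a + b)) (hf : PartialColoring G a b v f) :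
    2 * a + b - G.degree v ≤
      {u | G.Adj v u ∧ OneSaturated G a b v f u ∧ UniqueColor G v f u}.ncard := by
  classical
  set S := {u ∈ G.neighborFinset v | OneSaturated G a b v f u ∧ UniqueColor G v f u}
  have hS : {u | G.Adj v u ∧ OneSaturated G a b v f u ∧ UniqueColor G v f u}.ncard = #S := by
    rw [← Set.ncard_coe_finset]
    congr 1
    ext u
    simp [S]
  have hcount : G.degree v + #S = ∑ i, (#{u ∈ G.neighborFinset v | f u = i} +
      #{u ∈ G.neighborFinset v |
        OneSaturated G a b v f u ∧ UniqueColor G v f u ∧ f u = i}) := by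
    rw [sum_add_distrib, ← card_neighborFinset_eq_degree,
      ← card_eq_sum_card_fiberwise fun _ _ ↦ mem_univ _]
    have hfiber : ∀ i, {u ∈ G.neighborFinset v |
        OneSaturated G a b v f u ∧ UniqueColor G v f u ∧ f u = i} = {u ∈ S | f u = i} := by
      simp [S, filter_filter, and_assoc]
    simp only [hfiber, ← card_eq_sum_card_fiberwise fun _ _ ↦ mem_univ _]
  have hsum : 2 * a + b ≤ G.degree v + #S := by
    rw [hcount, Fin.sum_univ_add]
    calc 2 * a + b = ∑ _i : Fin a, 2 + ∑ _i : Fin b, 1 := by simp [mul_comm]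
      _ ≤ _ := by
        gcongr with i _ i _
        · exact hf.two_le_card_adj_of_type_one hnc i.isLt
        · obtain ⟨u, hvu, hfu⟩ := hf.exists_adj_of_type_zero hnc (Fin.le_coe_natAdd a i)
          exact le_add_right (one_le_card.2 ⟨u, by simpa using ⟨hvu, hfu⟩⟩)
  omega

/-- If `G` is vertex-minimal non-`(1_1,…,1_a,0_1,…,0_b)`-colorable, `deg(v) < 2a + b`,
and `f` is a coloring of `G - v`, then `v` has at least `2a + b - deg(v)` neighbors that
are 1-saturated and whose colors appear exactly once among the neighbors of `v`. -/
theorem stmt5 {V : Type*} [Fintype V] (G : SimpleGraph V) [DecidableRel G.Adj]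
    (a b : ℕ) (ha : 1 ≤ a)
    (hnc : ¬ DColorable G a b)
    (hmin : ∀ x : V, DColorable (G.induce {x}ᶜ) a b)
    (v : V) (hdeg : G.degree v < 2 * a + b)
    (f : V → Fin (a + b)) (hf : PartialColoring G a b v f) :
    2 * a + b - G.degree v ≤
      {u | G.Adj v u ∧ OneSaturated G a b v f u ∧ UniqueColor G v f u}.ncard :=
  stmt5_general G a b hnc v f hf
end

section
/- Let G be vertex-minimal non-(1_1,...,1_a,0_1,...,0_b)-colorable and let v be a vertex of G. If in a coloring of G−v a neighbor u of v has a type-1 color that appears exactly once in N(v) and no neighbor of u has that color, then assigning v the color of u yields a valid coloring of G, a contradiction; hence in any coloring of G−v no neighbor of v has a type-1 color appearing exactly once in N(v) without a neighbor of u of that color. -/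
/-- If `G` is vertex-minimal non-`(1_1,…,1_a,0_1,…,0_b)`-colorable and `f` is a coloring
of `G - v`, then `v` has no neighbor `u` with a type-1 color appearing exactly once in
`N(v)` such that no neighbor of `u` has the same color (else assigning `v` the color of
`u` would yield a valid coloring of `G`). -/
theorem stmt6 {V : Type*} [Fintype V] (G : SimpleGraph V) [DecidableRel G.Adj]
    (a b : ℕ) (ha : 1 ≤ a)
    (hnc : ¬ DColorable G a b)
    (hmin : ∀ x : V, DColorable (G.induce {x}ᶜ) a b)
    (v : V) (f : V → Fin (a + b)) (hf : PartialColoring G a b v f) :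
    ¬ ∃ u, G.Adj v u ∧ (f u : ℕ) < a ∧ UniqueColor G v f u ∧
        ¬ ∃ w, w ≠ v ∧ G.Adj u w ∧ f w = f u := by
  classical
  rintro ⟨u, hvu, hua, huniq, hnou⟩
  apply hnc
  set c := f u with hc
  refine ⟨Function.update f v c, ?_, ?_⟩
  · intro x hx
    by_cases hxv : x = v
    · subst hxv
      intro w hw w' hw'
      have hwv : w ≠ x := fun h => G.loopless.irrefl x (h ▸ hw.1)
      have hwv' : w' ≠ x := fun h => G.loopless.irrefl x (h ▸ hw'.1)
      have h1 : f w = c := by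
        have := hw.2; rwa [Function.update_of_ne hwv, Function.update_self] at this
      have h2 : f w' = c := by
        have := hw'.2; rwa [Function.update_of_ne hwv', Function.update_self] at this
      rw [huniq w hw.1 h1, huniq w' hw'.1 h2]
    · rw [Function.update_of_ne hxv] at hx
      intro w hw w' hw'
      -- helper: if a member equals v, then x = u and any non-v member is impossible
      have key : ∀ z, G.Adj x z → Function.update f v c z = Function.update f v c x →
          z ≠ v → (G.Adj x v ∧ c = f x) → False := by
        rintro z hadj heq hzv ⟨hxvadj, hcfx⟩
        have hxu : x = u := huniq x (G.adj_symm hxvadj) (by rw [← hcfx])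
        rw [Function.update_of_ne hzv, Function.update_of_ne hxv] at heq
        exact hnou ⟨z, hzv, hxu ▸ hadj, by rw [heq, ← hcfx]⟩
      by_cases hwv : w = v
      · by_cases hwv' : w' = v
        · rw [hwv, hwv']
        · exfalso
          have hcfx : c = f x := by
            have := hw.2
            rw [hwv, Function.update_self, Function.update_of_ne hxv] at this
            exact this
          exact key w' hw'.1 hw'.2 hwv' ⟨hwv ▸ hw.1, hcfx⟩
      · by_cases hwv' : w' = v
        · exfalso
          have hcfx : c = f x := by
            have := hw'.2
            rw [hwv', Function.update_self, Function.update_of_ne hxv] at this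
            exact this
          exact key w hw.1 hw.2 hwv ⟨hwv' ▸ hw'.1, hcfx⟩
        · have h1 : f w = f x := by
            have := hw.2
            rwa [Function.update_of_ne hwv, Function.update_of_ne hxv] at this
          have h2 : f w' = f x := by
            have := hw'.2
            rwa [Function.update_of_ne hwv', Function.update_of_ne hxv] at this
          exact hf.1 x hxv hx ⟨hwv, hw.1, h1⟩ ⟨hwv', hw'.1, h2⟩
  · intro x hx w hadj
    have hxv : x ≠ v := by
      intro h
      rw [h, Function.update_self] at hx
      exact absurd hua (not_lt.mpr hx)
    rw [Function.update_of_ne hxv] at hx ⊢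
    by_cases hwv : w = v
    · rw [hwv, Function.update_self]
      intro h
      have : (c : ℕ) = (f x : ℕ) := by rw [h]
      omega
    · rw [Function.update_of_ne hwv]
      exact hf.2 x hxv hx w hwv hadj
end

section
/- Let G be a graph, a,b nonnegative integers with a ≥ 1, and suppose V(G) is covered by an increasing sequence of sets F_0 ⊆ F_1 ⊆ ... ⊆ F_m = V(G), where F_0 = {v : deg(v) ≥ 2a+2b} and each v ∈ F_{k+1} − F_k has at least max{a − h(v), 0} neighbors in F_k and at least a + b − h(v) neighbors in F_{k+1}, where h(v) = deg(v) − (a+b) ≥ 0. Then 2|E(G)| ≥ (4a/3 + b)|V(G)|, i.e., mad(G) ≥ 4a/3 + b (if V(G) ≠ ∅). -/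
/-- The discharging half of the main theorem: if `V(G)` is covered by an increasing flag
sequence `F_0 ⊆ F_1 ⊆ … ⊆ F_m = V(G)` with `F_0 = {v : deg(v) ≥ 2a+2b}`, the minimum
degree is at least `a + b`, and every `v ∈ F_{k+1} - F_k` has at least `max{a - h(v), 0}`
neighbors in `F_k` and at least `a + b - h(v)` neighbors in `F_{k+1}` (where
`h(v) = deg(v) - (a+b)`), then `2|E(G)| ≥ (4a/3 + b)|V(G)|`. -/
theorem stmt11 {V : Type*} [Fintype V] [DecidableEq V] (G : SimpleGraph V)
    [DecidableRel G.Adj] (a b : ℕ) (ha : 1 ≤ a)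
    (m : ℕ) (F : ℕ → Finset V)
    (hmono : ∀ k, F k ⊆ F (k + 1))
    (hF0 : F 0 = Finset.univ.filter fun v => 2 * a + 2 * b ≤ G.degree v)
    (hFm : F m = Finset.univ)
    (hmin : ∀ v : V, a + b ≤ G.degree v)
    (hstep : ∀ k, ∀ v ∈ F (k + 1) \ F k,
      (a : ℤ) - ((G.degree v : ℤ) - (a + b)) ≤ ((G.neighborFinset v ∩ F k).card : ℤ) ∧
      (a : ℤ) + b - ((G.degree v : ℤ) - (a + b)) ≤
        ((G.neighborFinset v ∩ F (k + 1)).card : ℤ)) :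
    (4 * (a : ℝ) / 3 + b) * Fintype.card V ≤ 2 * G.edgeFinset.card := by
  classical
  have hex : ∀ v : V, ∃ k, v ∈ F k := fun v => ⟨m, hFm ▸ Finset.mem_univ v⟩
  set r : V → ℕ := fun v => Nat.find (hex v) with hr
  have hrspec : ∀ v, v ∈ F (r v) := fun v => Nat.find_spec (hex v)
  have hmono' : ∀ {j k : ℕ}, j ≤ k → F j ⊆ F k := by
    intro j k h
    induction h with
    | refl => exact Finset.Subset.refl _
    | step _ ih => exact ih.trans (hmono _)
  have hrle : ∀ {v : V} {k : ℕ}, v ∈ F k → r v ≤ k := fun h => Nat.find_le h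
  have hmemle : ∀ {v : V} {k : ℕ}, r v ≤ k → v ∈ F k := fun h => hmono' h (hrspec _)
  set IN : V → ℕ := fun v => ((G.neighborFinset v).filter fun u => r u < r v).card with hIN
  set OUT : V → ℕ := fun v => ((G.neighborFinset v).filter fun u => r v < r u).card with hOUT
  -- conservation
  have hconserve : ∑ v, IN v = ∑ v, OUT v := by
    have e1 : ∀ v, IN v = ∑ u, if G.Adj v u ∧ r u < r v then 1 else 0 := by
      intro v
      show ((G.neighborFinset v).filter fun u => r u < r v).card = _
      rw [SimpleGraph.neighborFinset_eq_filter, Finset.filter_filter, Finset.card_filter]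
    have e2 : ∀ v, OUT v = ∑ u, if G.Adj v u ∧ r v < r u then 1 else 0 := by
      intro v
      show ((G.neighborFinset v).filter fun u => r v < r u).card = _
      rw [SimpleGraph.neighborFinset_eq_filter, Finset.filter_filter, Finset.card_filter]
    simp only [e1, e2]
    rw [Finset.sum_comm]
    refine Finset.sum_congr rfl fun v _ => Finset.sum_congr rfl fun u _ => ?_
    simp only [G.adj_comm u v]
  -- per-vertex inequality
  have key : ∀ v, (OUT v : ℤ) + a ≤ 3 * ((G.degree v : ℤ) - (a + b)) + IN v := by
    intro v
    have hdeg : (IN v : ℤ) ≥ 0 := Int.ofNat_nonneg _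
    rcases hn : r v with _ | k
    · -- rank 0
      have hv0 : v ∈ F 0 := hmemle (by omega)
      rw [hF0, Finset.mem_filter] at hv0
      have hd : (2 * a + 2 * b : ℤ) ≤ G.degree v := by exact_mod_cast hv0.2
      have hout : (OUT v : ℤ) ≤ G.degree v := by
        have : OUT v ≤ G.degree v := by
          rw [hOUT, ← G.card_neighborFinset_eq_degree]
          exact Finset.card_filter_le _ _
        exact_mod_cast this
      have hb : (0 : ℤ) ≤ b := Int.ofNat_nonneg _
      linarith
    · -- rank k+1
      have hv1 : v ∈ F (k + 1) := hmemle (by omega)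
      have hv2 : v ∉ F k := fun h => by have := hrle h; omega
      obtain ⟨h1, h2⟩ := hstep k v (Finset.mem_sdiff.mpr ⟨hv1, hv2⟩)
      have hin : ((G.neighborFinset v ∩ F k).card : ℤ) ≤ IN v := by
        have : (G.neighborFinset v ∩ F k) ⊆
            (G.neighborFinset v).filter fun u => r u < r v := by
          intro u hu
          rw [Finset.mem_inter] at hu
          rw [Finset.mem_filter]
          refine ⟨hu.1, ?_⟩
          have := hrle hu.2
          omega
        exact_mod_cast Finset.card_le_card this
      have hout : (OUT v : ℤ) + (G.neighborFinset v ∩ F (k + 1)).card ≤ G.degree v := by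
        have hdisj : Disjoint ((G.neighborFinset v).filter fun u => r v < r u)
            (G.neighborFinset v ∩ F (k + 1)) := by
          rw [Finset.disjoint_left]
          intro u hu1 hu2
          rw [Finset.mem_filter] at hu1
          rw [Finset.mem_inter] at hu2
          have := hrle hu2.2
          omega
        have : OUT v + (G.neighborFinset v ∩ F (k + 1)).card ≤ G.degree v := by
          rw [hOUT, ← G.card_neighborFinset_eq_degree,
            ← Finset.card_union_of_disjoint hdisj]
          apply Finset.card_le_card
          intro u hu
          rcases Finset.mem_union.mp hu with h | h
          · exact (Finset.mem_filter.mp h).1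
          · exact (Finset.mem_inter.mp h).1
        exact_mod_cast this
      linarith
  -- sum up
  have hsum := Finset.sum_le_sum (fun v (_ : v ∈ Finset.univ) => key v)
  rw [Finset.sum_add_distrib, Finset.sum_add_distrib, Finset.sum_const,
    Finset.card_univ, nsmul_eq_mul] at hsum
  have hIO : (∑ v, (IN v : ℤ)) = ∑ v, (OUT v : ℤ) := by exact_mod_cast hconserve
  have hdegsum : (∑ v, (G.degree v : ℤ)) = 2 * G.edgeFinset.card := by
    exact_mod_cast G.sum_degrees_eq_twice_card_edges
  have htotal : ((4 * a + 3 * b) * Fintype.card V : ℤ) ≤ 6 * G.edgeFinset.card := by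
    have expand : (∑ v, 3 * ((G.degree v : ℤ) - (a + b)))
        = 3 * (2 * G.edgeFinset.card) - 3 * (a + b) * Fintype.card V := by
      simp only [mul_sub, Finset.sum_sub_distrib, ← Finset.mul_sum, hdegsum,
        Finset.sum_const, Finset.card_univ, nsmul_eq_mul]
      ring
    rw [expand, hIO] at hsum
    linarith
  have hR : ((4 * a + 3 * b) * Fintype.card V : ℝ) ≤ 6 * G.edgeFinset.card := by
    exact_mod_cast htotal
  push_cast at hR ⊢
  linarith
end

section
/- Let G be a vertex-minimal non-(1_1,...,1_a,0_1,...,0_b)-colorable graph (a ≥ 1) and let F ⊊ V(G) be any proper subset. Then there exists a nonempty set H ⊆ V(G) − F such that every v ∈ H has at least max{a − h(v), 0} neighbors in F and at least a + b − h(v) neighbors in H ∪ F, where h(v) = deg(v) − (a+b). -/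
/-!
Among all pairs `(w, f)` with `w ∉ F` and `f` a coloring of `G - w`, take those with the fewest
`1`-saturated vertices outside `F`, and let `H` be the set of vertices `w` occurring in them.
At such a `w` every color occurs in `N(w)`, since otherwise `w` could be colored. If a color `c`
occurs on a single neighbor `u`, recoloring `w` with `c` turns `f` into a coloring of `G - u`
without new saturated vertices, so `u ∈ H ∪ F`. If moreover `c` is one of the first `a` colors
and `u ∉ F`, then `u` is saturated (otherwise `w` could be colored `c` outright) and the move
desaturates it, contradicting minimality; so `u ∈ F`. Every color class of `N(w)` thus has two
vertices or is a singleton in `F` (resp. `H ∪ F`), and counting gives both bounds.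
-/

open Finset Function

-- Each fiber over `T` has at least two elements unless it is a singleton inside `U`.
theorem Finset.card_add_card_le_card_add_card_inter {α ι : Type*} [DecidableEq α]
    [Fintype ι] [DecidableEq ι] {s U : Finset α} {T : Finset ι} {f : α → ι}
    (hf : ∀ c, ∃ x ∈ s, f x = c)
    (hU : ∀ c ∈ T, ∀ u, {x ∈ s | f x = c} = {u} → u ∈ U) :
    Fintype.card ι + #T ≤ #s + #(s ∩ U) := by
  set S := {c ∈ T | #{x ∈ s | f x = c} = 1}
  have hS : #S ≤ #(s ∩ U) := by
    refine (card_le_card fun c hc => ?_).trans (card_image_le (f := f))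
    obtain ⟨hcT, hone⟩ := mem_filter.1 hc
    obtain ⟨u, hu⟩ := card_eq_one.1 hone
    have hus := mem_filter.1 (hu ▸ mem_singleton_self u)
    exact mem_image.2 ⟨u, mem_inter.2 ⟨hus.1, hU c hcT u hu⟩, hus.2⟩
  have hcount : Fintype.card ι + #T ≤ #s + #S := by
    calc Fintype.card ι + #T = ∑ c, (1 + if c ∈ T then 1 else 0) := by
          simp [sum_add_distrib]
      _ ≤ ∑ c, (#{x ∈ s | f x = c} + if c ∈ S then 1 else 0) := by
          refine sum_le_sum fun c _ => ?_
          obtain ⟨x, hx, hfx⟩ := hf c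
          have : 0 < #{x ∈ s | f x = c} := card_pos.2 ⟨x, mem_filter.2 ⟨hx, hfx⟩⟩
          simp only [S, mem_filter]
          split_ifs <;> grind
      _ = #s + #S := by
          rw [sum_add_distrib, ← card_eq_sum_card_fiberwise fun x _ => mem_univ (f x)]
          simp
  omega

namespace SimpleGraph

variable {V ι : Type*} {a b : ℕ}

def sameColorNeighborSet (H : SimpleGraph V) (f : V → ι) (v : V) : Set V :=
  {x | H.Adj v x ∧ f x = f v}

def IsDColoringAt (H : SimpleGraph V) (a b : ℕ) (f : V → Fin (a + b)) (v : V) : Prop :=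
  (H.sameColorNeighborSet f v).Subsingleton ∧
    ((f v : ℕ) < a ∨ H.sameColorNeighborSet f v = ∅)

def IsDColoring (H : SimpleGraph V) (a b : ℕ) (f : V → Fin (a + b)) : Prop :=
  ∀ v, H.IsDColoringAt a b f v

lemma isDColoringAt_of_eq_empty {H : SimpleGraph V} {f : V → Fin (a + b)} {v : V}
    (h : H.sameColorNeighborSet f v = ∅) : H.IsDColoringAt a b f v :=
  ⟨h ▸ Set.subsingleton_empty, .inr h⟩

lemma IsDColoringAt.of_subset {H H' : SimpleGraph V} {f g : V → Fin (a + b)} {v : V}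
    (h : H.IsDColoringAt a b f v) (hv : g v = f v)
    (hs : H'.sameColorNeighborSet g v ⊆ H.sameColorNeighborSet f v) :
    H'.IsDColoringAt a b g v :=
  ⟨h.1.anti hs, hv ▸ h.2.imp_right fun he => Set.subset_eq_empty hs he⟩

lemma dColorable_iff {G : SimpleGraph V} : DColorable G a b ↔ ∃ f, G.IsDColoring a b f := by
  refine exists_congr fun f =>
    ⟨fun ⟨hlow, hhigh⟩ v => ?_, fun hf => ⟨fun v _ => (hf v).1, ?_⟩⟩
  · by_cases hv : (f v : ℕ) < a
    · exact ⟨hlow v hv, .inl hv⟩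
    · exact isDColoringAt_of_eq_empty <| Set.eq_empty_iff_forall_notMem.2
        fun x hx => hhigh v (not_lt.1 hv) x hx.1 hx.2
  · intro v hv x hvx hx
    obtain hlt | he := (hf v).2
    · omega
    · exact he.subset ⟨hvx, hx⟩

lemma sameColorNeighborSet_deleteIncidenceSet_self (G : SimpleGraph V) (f : V → ι) (w : V) :
    (G.deleteIncidenceSet w).sameColorNeighborSet f w = ∅ :=
  Set.eq_empty_iff_forall_notMem.2 fun _ hx => (deleteIncidenceSet_adj.1 hx.1).2.1 rfl

/-- A coloring of `G - w` is encoded as a coloring of all of `V` for `G.deleteIncidenceSet w`,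
in which `w` is isolated and its color irrelevant. -/
lemma exists_isDColoring_deleteIncidenceSet {G : SimpleGraph V} {w : V} (hab : 0 < a + b)
    (h : DColorable (G.induce {w}ᶜ) a b) :
    ∃ f, (G.deleteIncidenceSet w).IsDColoring a b f := by
  obtain ⟨f₀, hf₀⟩ := dColorable_iff.1 h
  set f : V → Fin (a + b) := extend Subtype.val f₀ fun _ => ⟨0, hab⟩
  have hf : ∀ x : ({w}ᶜ : Set V), f x = f₀ x := Subtype.val_injective.extend_apply _ _
  refine ⟨f, fun v => ?_⟩
  by_cases hv : v = w
  · exact isDColoringAt_of_eq_empty (hv ▸ sameColorNeighborSet_deleteIncidenceSet_self G f v)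
  have hv₀ : f v = f₀ ⟨v, hv⟩ := hf ⟨v, hv⟩
  have himage : (G.deleteIncidenceSet w).sameColorNeighborSet f v =
      Subtype.val '' (G.induce {w}ᶜ).sameColorNeighborSet f₀ ⟨v, hv⟩ := by
    ext x
    constructor
    · rintro ⟨hvx, hx⟩
      obtain ⟨hvx, -, hxw⟩ := deleteIncidenceSet_adj.1 hvx
      refine ⟨⟨x, hxw⟩, ⟨by simpa using hvx, ?_⟩, rfl⟩
      rw [← hf, ← hv₀]
      exact hx
    · rintro ⟨x, ⟨hvx, hx⟩, rfl⟩
      refine ⟨deleteIncidenceSet_adj.2 ⟨by simpa using hvx, hv, x.2⟩, ?_⟩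
      rw [hf, hv₀]
      exact hx
  rw [IsDColoringAt, himage, hv₀, Set.image_eq_empty]
  exact ⟨(hf₀ _).1.image _, (hf₀ _).2⟩

def saturatedSet (H : SimpleGraph V) (F : Set V) (f : V → Fin (a + b)) : Set V :=
  {v | v ∉ F ∧ (f v : ℕ) < a ∧ (H.sameColorNeighborSet f v).Nonempty}

section Update

variable [DecidableEq V] {G H : SimpleGraph V} {w u : V} {f : V → Fin (a + b)} {c : Fin (a + b)}

lemma sameColorNeighborSet_update_subset (hH : H ≤ G) (hc : ∀ x, H.Adj w x → f x ≠ c)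
    (v : V) :
    H.sameColorNeighborSet (update f w c) v ⊆
      (G.deleteIncidenceSet w).sameColorNeighborSet f v := by
  rintro x ⟨hvx, hx⟩
  have hvw : v ≠ w := by
    rintro rfl
    rw [update_self, update_of_ne hvx.ne'] at hx
    exact hc x hvx hx
  have hxw : x ≠ w := by
    rintro rfl
    rw [update_self, update_of_ne hvw] at hx
    exact hc v hvx.symm hx.symm
  rw [update_of_ne hxw, update_of_ne hvw] at hx
  exact ⟨deleteIncidenceSet_adj.2 ⟨hH hvx, hvw, hxw⟩, hx⟩

lemma IsDColoring.update_of_forall_adj_ne (hf : (G.deleteIncidenceSet w).IsDColoring a b f)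
    (hH : H ≤ G) (hc : ∀ x, H.Adj w x → f x ≠ c) : H.IsDColoring a b (update f w c) := by
  intro v
  by_cases hvw : v = w
  · subst hvw
    exact isDColoringAt_of_eq_empty <| Set.subset_eq_empty
      (sameColorNeighborSet_update_subset hH hc v)
      (sameColorNeighborSet_deleteIncidenceSet_self G f v)
  · exact (hf v).of_subset (update_of_ne hvw c f) (sameColorNeighborSet_update_subset hH hc v)

lemma saturatedSet_update_subset (F : Set V) (hH : H ≤ G) (hc : ∀ x, H.Adj w x → f x ≠ c) :
    H.saturatedSet F (update f w c) ⊆ (G.deleteIncidenceSet w).saturatedSet F f := by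
  rintro v ⟨hvF, hva, x, hx⟩
  have hx' := sameColorNeighborSet_update_subset hH hc v hx
  have hvw : v ≠ w := by
    rintro rfl
    simp [sameColorNeighborSet_deleteIncidenceSet_self] at hx'
  rw [update_of_ne hvw] at hva
  exact ⟨hvF, hva, x, hx'⟩

lemma IsDColoring.exists_adj_apply_eq (hf : (G.deleteIncidenceSet w).IsDColoring a b f)
    (hnc : ¬ DColorable G a b) (c : Fin (a + b)) : ∃ x, G.Adj w x ∧ f x = c := by
  by_contra! h
  exact hnc <| dColorable_iff.2 ⟨_, hf.update_of_forall_adj_ne le_rfl h⟩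

lemma IsDColoring.update_of_unsaturated (hf : (G.deleteIncidenceSet w).IsDColoring a b f)
    (hca : (c : ℕ) < a) (hu : ∀ x, G.Adj w x ∧ f x = c ↔ x = u)
    (hunsat : (G.deleteIncidenceSet w).sameColorNeighborSet f u = ∅) :
    G.IsDColoring a b (update f w c) := by
  obtain ⟨hwu, hfu⟩ := (hu u).2 rfl
  have huw : u ≠ w := hwu.ne'
  intro v
  by_cases hvw : v = w
  · subst hvw
    refine ⟨Set.subsingleton_singleton.anti (t := {u}) ?_, .inl (by simpa using hca)⟩
    rintro x ⟨hvx, hx⟩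
    rw [update_self, update_of_ne hvx.ne'] at hx
    exact (hu x).1 ⟨hvx, hx⟩
  by_cases hvu : v = u
  · subst hvu
    refine ⟨Set.subsingleton_singleton.anti (t := {w}) ?_, .inl (by simpa [huw, hfu] using hca)⟩
    rintro x ⟨hvx, hx⟩
    by_contra hxw
    rw [update_of_ne hxw, update_of_ne huw] at hx
    exact hunsat.subset ⟨deleteIncidenceSet_adj.2 ⟨hvx, huw, hxw⟩, hx⟩
  refine (hf v).of_subset (update_of_ne hvw c f) ?_
  rintro x ⟨hvx, hx⟩
  have hxw : x ≠ w := by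
    rintro rfl
    rw [update_self, update_of_ne hvw] at hx
    exact hvu ((hu v).1 ⟨hvx.symm, hx.symm⟩)
  rw [update_of_ne hxw, update_of_ne hvw] at hx
  exact ⟨deleteIncidenceSet_adj.2 ⟨hvx, hvw, hxw⟩, hx⟩

omit [DecidableEq V] in
lemma forall_deleteIncidenceSet_adj_ne (hu : ∀ x, G.Adj w x ∧ f x = c ↔ x = u) :
    ∀ x, (G.deleteIncidenceSet u).Adj w x → f x ≠ c := fun x hwx hx =>
  (deleteIncidenceSet_adj.1 hwx).2.2 ((hu x).1 ⟨(deleteIncidenceSet_adj.1 hwx).1, hx⟩)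

end Update

structure IsMinPartialColoring (G : SimpleGraph V) (F : Set V) (w : V)
    (f : V → Fin (a + b)) : Prop where
  notMem : w ∉ F
  isDColoring : (G.deleteIncidenceSet w).IsDColoring a b f
  ncard_saturatedSet_le : ∀ u ∉ F, ∀ g : V → Fin (a + b),
    (G.deleteIncidenceSet u).IsDColoring a b g →
      ((G.deleteIncidenceSet w).saturatedSet F f).ncard ≤
        ((G.deleteIncidenceSet u).saturatedSet F g).ncard

lemma exists_isMinPartialColoring [Finite V] {G : SimpleGraph V} {F : Set V}
    (hF : ∃ w, w ∉ F) (hcol : ∀ w, ∃ f, (G.deleteIncidenceSet w).IsDColoring a b f) :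
    ∃ w, ∃ f : V → Fin (a + b), G.IsMinPartialColoring F w f := by
  obtain ⟨w, hw⟩ := hF
  obtain ⟨f, hf⟩ := hcol w
  let S : Set (V × (V → Fin (a + b))) :=
    {p | p.1 ∉ F ∧ (G.deleteIncidenceSet p.1).IsDColoring a b p.2}
  obtain ⟨⟨w, f⟩, ⟨hwF, hf⟩, hmin⟩ := S.exists_min_image
    (fun p => ((G.deleteIncidenceSet p.1).saturatedSet F p.2).ncard) S.toFinite ⟨(w, f), hw, hf⟩
  exact ⟨w, f, hwF, hf, fun u hu g hg => hmin (u, g) ⟨hu, hg⟩⟩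

namespace IsMinPartialColoring

variable [Finite V] [DecidableEq V] {G : SimpleGraph V} {F : Set V} {w u : V}
  {f : V → Fin (a + b)} {c : Fin (a + b)}

lemma update (hf : G.IsMinPartialColoring F w f) (hu : ∀ x, G.Adj w x ∧ f x = c ↔ x = u)
    (huF : u ∉ F) : G.IsMinPartialColoring F u (Function.update f w c) := by
  have hc := forall_deleteIncidenceSet_adj_ne hu
  refine ⟨huF, hf.isDColoring.update_of_forall_adj_ne (deleteIncidenceSet_le G u) hc,
    fun v hv g hg => le_trans ?_ (hf.ncard_saturatedSet_le v hv g hg)⟩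
  exact Set.ncard_le_ncard (saturatedSet_update_subset F (deleteIncidenceSet_le G u) hc)

lemma mem_of_forall_adj_iff (hf : G.IsMinPartialColoring F w f) (hnc : ¬ DColorable G a b)
    (hca : (c : ℕ) < a) (hu : ∀ x, G.Adj w x ∧ f x = c ↔ x = u) : u ∈ F := by
  by_contra huF
  obtain hunsat | hsat :=
    ((G.deleteIncidenceSet w).sameColorNeighborSet f u).eq_empty_or_nonempty
  · exact hnc <| dColorable_iff.2 ⟨_, hf.isDColoring.update_of_unsaturated hca hu hunsat⟩
  have hc := forall_deleteIncidenceSet_adj_ne hu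
  have hsub : (G.deleteIncidenceSet u).saturatedSet F (Function.update f w c) ⊂
      (G.deleteIncidenceSet w).saturatedSet F f := by
    refine (Set.ssubset_iff_of_subset
      (saturatedSet_update_subset F (deleteIncidenceSet_le G u) hc)).2 ⟨u, ?_, fun h => ?_⟩
    · exact ⟨huF, ((hu u).2 rfl).2 ▸ hca, hsat⟩
    · simpa [sameColorNeighborSet_deleteIncidenceSet_self] using h.2.2
  exact (Set.ncard_lt_ncard hsub).not_ge
    (hf.ncard_saturatedSet_le u huF _ (hf.update hu huF).isDColoring)

end IsMinPartialColoring

end SimpleGraph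

theorem stmt12_general {V : Type*} [Fintype V] [DecidableEq V] (G : SimpleGraph V)
    [DecidableRel G.Adj] (a b : ℕ) (ha : 1 ≤ a)
    (hnc : ¬ DColorable G a b)
    (hmin : ∀ v : V, DColorable (G.induce {v}ᶜ) a b)
    (F : Finset V) (hF : F ⊂ Finset.univ) :
    ∃ H : Finset V, H.Nonempty ∧ (∀ v ∈ H, v ∉ F) ∧
      ∀ v ∈ H,
        (a : ℤ) - ((G.degree v : ℤ) - (a + b)) ≤ ((G.neighborFinset v ∩ F).card : ℤ) ∧
        (a : ℤ) + b - ((G.degree v : ℤ) - (a + b)) ≤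
          ((G.neighborFinset v ∩ (H ∪ F)).card : ℤ) := by
  classical
  obtain ⟨w₀, -, hw₀⟩ := Finset.exists_of_ssubset hF
  obtain ⟨w, f, hwf⟩ :=
    SimpleGraph.exists_isMinPartialColoring (F := (F : Set V)) ⟨w₀, hw₀⟩
      fun v => SimpleGraph.exists_isDColoring_deleteIncidenceSet (by omega) (hmin v)
  set H : Finset V := {v | ∃ f : V → Fin (a + b), G.IsMinPartialColoring F v f}
  have hH : ∀ {v}, v ∈ H ↔ ∃ f : V → Fin (a + b), G.IsMinPartialColoring F v f := by
    simp [H]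
  refine ⟨H, ⟨w, hH.2 ⟨f, hwf⟩⟩, fun v hv => (hH.1 hv).choose_spec.notMem,
    fun v hv => ?_⟩
  obtain ⟨f, hvf⟩ := hH.1 hv
  have hsurj (c : Fin (a + b)) : ∃ x ∈ G.neighborFinset v, f x = c := by
    simpa using hvf.isDColoring.exists_adj_apply_eq hnc c
  have hfiber {c : Fin (a + b)} {u : V} (hu : {x ∈ G.neighborFinset v | f x = c} = {u}) :
      ∀ x, G.Adj v x ∧ f x = c ↔ x = u := by
    simpa [Finset.ext_iff] using hu
  have hlow := Finset.card_add_card_le_card_add_card_inter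
    (T := {c : Fin (a + b) | (c : ℕ) < a}) (U := F) hsurj
    fun c hc u hu => hvf.mem_of_forall_adj_iff hnc (by simpa using hc) (hfiber hu)
  have hall := Finset.card_add_card_le_card_add_card_inter (T := Finset.univ) (U := H ∪ F)
    hsurj fun c _ u hu => by
      by_cases huF : u ∈ F
      · exact Finset.mem_union_right _ huF
      · exact Finset.mem_union_left _ (hH.2 ⟨_, hvf.update (hfiber hu) huF⟩)
  rw [Fin.card_filter_val_lt] at hlow
  simp only [Finset.card_univ, Fintype.card_fin, SimpleGraph.card_neighborFinset_eq_degree]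
    at hlow hall
  omega

/-- Key structural lemma: if `G` is vertex-minimal non-`(1_1,…,1_a,0_1,…,0_b)`-colorable
(`a ≥ 1`) and `F ⊊ V(G)` contains all vertices of degree at least `2a+2b`, then there is a
nonempty set `H ⊆ V(G) - F` such that every `v ∈ H` has at least `max{a - h(v), 0}`
neighbors in `F` and at least `a + b - h(v)` neighbors in `H ∪ F`, where
`h(v) = deg(v) - (a+b)`. -/
theorem stmt12 {V : Type*} [Fintype V] [DecidableEq V] (G : SimpleGraph V)
    [DecidableRel G.Adj] (a b : ℕ) (ha : 1 ≤ a)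
    (hnc : ¬ DColorable G a b)
    (hmin : ∀ v : V, DColorable (G.induce {v}ᶜ) a b)
    (F : Finset V) (hF : F ⊂ Finset.univ)
    (hFdeg : ∀ v : V, 2 * a + 2 * b ≤ G.degree v → v ∈ F) :
    ∃ H : Finset V, H.Nonempty ∧ (∀ v ∈ H, v ∉ F) ∧
      ∀ v ∈ H,
        (a : ℤ) - ((G.degree v : ℤ) - (a + b)) ≤ ((G.neighborFinset v ∩ F).card : ℤ) ∧
        (a : ℤ) + b - ((G.degree v : ℤ) - (a + b)) ≤
          ((G.neighborFinset v ∩ (H ∪ F)).card : ℤ) :=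
  stmt12_general G a b ha hnc hmin F hF
end
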